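/- Let δ_1,...,δ_l be multiplicatively independent nonzero rational numbers, and let γ_1,...,γ_t be nonzero algebraic numbers, none of which is a root of rational, satisfying the non-degenerate condition [ℚ(γ_1,...,γ_t):ℚ] = ∏_i deg(γ_i). Then the combined sequence δ_1,...,δ_l,γ_1,...,γ_t is multiplicatively independent. -/

import Mathlib

/-! The non-degeneracy condition says that the compositum `ℚ(γ_1, …, γ_t)` has the largest
possible degree. This forces `ℚ(γ_j)` to be linearly disjoint from the field generated by the
other `γ_i`, so the two fields meet only in `ℚ`. Given a relation
`∏ δ_i ^ k_i * ∏ γ_i ^ c_i = 1`, the power `γ_j ^ c_j` is a rational number divided by a product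
of the other `γ_i ^ c_i`, hence lies in that intersection and is rational; since `γ_j` is not a
root of a rational number, `c_j = 0`. What is left is a relation among the `δ_i` alone. -/

/-- A complex number is a root of rational if some positive integer power
of it is rational. -/
def RootOfRational (a : ℂ) : Prop :=
  ∃ k : ℕ, 0 < k ∧ ∃ q : ℚ, a ^ k = (q : ℂ)

open IntermediateField Module

namespace IntermediateField

variable {K L ι : Type*} [Field K] [Field L] [Algebra K L] [DecidableEq ι]

theorem adjoin_image_insert (x : ι → L) (a : ι) (s : Finset ι) :
    adjoin K (x '' ↑(insert a s)) = K⟮x a⟯ ⊔ adjoin K (x '' ↑s) := by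
  rw [Finset.coe_insert, Set.image_insert_eq, Set.insert_eq, adjoin_union]

theorem finrank_adjoin_image_le (x : ι → L) (s : Finset ι) :
    finrank K (adjoin K (x '' ↑s)) ≤ ∏ i ∈ s, finrank K K⟮x i⟯ := by
  induction s using Finset.induction_on with
  | empty =>
    rw [Finset.coe_empty, Set.image_empty, adjoin_empty, IntermediateField.finrank_bot,
      Finset.prod_empty]
  | insert a s has ih =>
    rw [adjoin_image_insert, Finset.prod_insert has]
    exact (finrank_sup_le _ _).trans (Nat.mul_le_mul_left _ ih)

variable [Fintype ι]

theorem adjoin_simple_sup_adjoin_image_erase (x : ι → L) (j : ι) :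
    K⟮x j⟯ ⊔ adjoin K (x '' ↑(Finset.univ.erase j)) = adjoin K (Set.range x) := by
  rw [← adjoin_image_insert, Finset.insert_erase (Finset.mem_univ j), Finset.coe_univ,
    Set.image_univ]

theorem adjoin_simple_inf_adjoin_image_erase_eq_bot {x : ι → L} (hx : ∀ i, IsIntegral K (x i))
    (hdeg : finrank K (adjoin K (Set.range x)) = ∏ i, finrank K K⟮x i⟯) (j : ι) :
    K⟮x j⟯ ⊓ adjoin K (x '' ↑(Finset.univ.erase j)) = ⊥ := by
  have : FiniteDimensional K K⟮x j⟯ := adjoin.finiteDimensional (hx j)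
  have : FiniteDimensional K (adjoin K (x '' ↑(Finset.univ.erase j))) :=
    finiteDimensional_adjoin (by rintro _ ⟨i, -, rfl⟩; exact hx i)
  refine (LinearDisjoint.of_finrank_sup (le_antisymm (finrank_sup_le _ _) ?_)).inf_eq_bot
  calc finrank K K⟮x j⟯ * finrank K (adjoin K (x '' ↑(Finset.univ.erase j)))
      ≤ finrank K K⟮x j⟯ * ∏ i ∈ Finset.univ.erase j, finrank K K⟮x i⟯ :=
        Nat.mul_le_mul_left _ (finrank_adjoin_image_le x _)
    _ = finrank K ↥(K⟮x j⟯ ⊔ adjoin K (x '' ↑(Finset.univ.erase j))) := by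
        rw [Finset.mul_prod_erase _ (fun i => finrank K K⟮x i⟯) (Finset.mem_univ j),
          adjoin_simple_sup_adjoin_image_erase, hdeg]

theorem zpow_mem_bot_of_prod_zpow_mem_bot {x : ι → L} (hx0 : ∀ i, x i ≠ 0)
    {j : ι} (hdisj : K⟮x j⟯ ⊓ adjoin K (x '' ↑(Finset.univ.erase j)) = ⊥) {c : ι → ℤ}
    (hprod : ∏ i, x i ^ c i ∈ (⊥ : IntermediateField K L)) :
    x j ^ c j ∈ (⊥ : IntermediateField K L) := by
  set B := adjoin K (x '' ↑(Finset.univ.erase j))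
  have hrest : ∏ i ∈ Finset.univ.erase j, x i ^ c i ∈ B :=
    prod_mem fun i hi => zpow_mem (subset_adjoin K _ (Set.mem_image_of_mem x hi)) _
  have hrest0 : ∏ i ∈ Finset.univ.erase j, x i ^ c i ≠ 0 :=
    Finset.prod_ne_zero_iff.mpr fun i _ => zpow_ne_zero _ (hx0 i)
  have hxj : x j ^ c j = (∏ i, x i ^ c i) / ∏ i ∈ Finset.univ.erase j, x i ^ c i := by
    rw [← Finset.mul_prod_erase _ _ (Finset.mem_univ j), mul_div_cancel_right₀ _ hrest0]
  rw [← hdisj]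
  exact ⟨zpow_mem (mem_adjoin_simple_self K _) _,
    hxj ▸ div_mem (bot_le (a := B) hprod) hrest⟩

end IntermediateField

theorem ne_zero_of_not_rootOfRational {a : ℂ} (h : ¬ RootOfRational a) : a ≠ 0 := by
  rintro rfl
  exact h ⟨1, one_pos, 0, by simp⟩

theorem rootOfRational_of_zpow_eq_ratCast {a : ℂ} {n : ℤ} (hn : n ≠ 0) {q : ℚ} (h : a ^ n = q) :
    RootOfRational a := by
  refine ⟨n.natAbs, Int.natAbs_pos.mpr hn, ?_⟩
  rcases Int.natAbs_eq n with hn' | hn'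
  · exact ⟨q, by rw [← zpow_natCast, ← hn', h]⟩
  · refine ⟨q⁻¹, ?_⟩
    rw [← zpow_natCast, ← neg_neg (n.natAbs : ℤ), ← hn', zpow_neg, h, Rat.cast_inv]

theorem stmt_16_general {l t : ℕ} (δ : Fin l → ℚ)
    (hδind : ∀ k : Fin l → ℤ, ∏ i, (δ i) ^ k i = 1 → ∀ i, k i = 0)
    (γ : Fin t → ℂ) (hγalg : ∀ j, IsAlgebraic ℚ (γ j))
    (hγnr : ∀ j, ¬ RootOfRational (γ j))
    (hnd : Module.finrank ℚ (IntermediateField.adjoin ℚ (Set.range γ)) =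
           ∏ j, (minpoly ℚ (γ j)).natDegree) :
    ∀ (k : Fin l → ℤ) (c : Fin t → ℤ),
      (∏ i, ((δ i : ℂ)) ^ k i) * ∏ j, γ j ^ c j = 1 →
      (∀ i, k i = 0) ∧ (∀ j, c j = 0) := by
  intro k c h
  set q : ℚ := ∏ i, δ i ^ k i
  have hq : (q : ℂ) * ∏ j, γ j ^ c j = 1 := by push_cast [q]; exact h
  have hint : ∀ j, IsIntegral ℚ (γ j) := fun j => (hγalg j).isIntegral
  have hdisj := adjoin_simple_inf_adjoin_image_erase_eq_bot hint
    (by simpa only [adjoin.finrank (hint _)] using hnd)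
  have hprod : ∏ j, γ j ^ c j ∈ (⊥ : IntermediateField ℚ ℂ) :=
    mem_bot.mpr ⟨q⁻¹, by rw [eq_ratCast, Rat.cast_inv, eq_inv_of_mul_eq_one_right hq]⟩
  have hc : ∀ j, c j = 0 := fun j => by
    by_contra hcj
    obtain ⟨r, hr⟩ := mem_bot.mp <| zpow_mem_bot_of_prod_zpow_mem_bot
      (fun i => ne_zero_of_not_rootOfRational (hγnr i)) (hdisj j) hprod
    exact hγnr j (rootOfRational_of_zpow_eq_ratCast hcj (by rw [← hr, eq_ratCast]))
  have hq1 : (q : ℂ) = 1 := by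
    simpa only [hc, zpow_zero, Finset.prod_const_one, mul_one] using hq
  exact ⟨hδind k (by exact_mod_cast hq1), hc⟩

theorem stmt_16 {l t : ℕ} (δ : Fin l → ℚ) (hδ0 : ∀ i, δ i ≠ 0)
    (hδind : ∀ k : Fin l → ℤ, ∏ i, (δ i) ^ k i = 1 → ∀ i, k i = 0)
    (γ : Fin t → ℂ) (hγ0 : ∀ j, γ j ≠ 0) (hγalg : ∀ j, IsAlgebraic ℚ (γ j))
    (hγnr : ∀ j, ¬ RootOfRational (γ j))
    (hnd : Module.finrank ℚ (IntermediateField.adjoin ℚ (Set.range γ)) =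
           ∏ j, (minpoly ℚ (γ j)).natDegree) :
    ∀ (k : Fin l → ℤ) (c : Fin t → ℤ),
      (∏ i, ((δ i : ℂ)) ^ k i) * ∏ j, γ j ^ c j = 1 →
      (∀ i, k i = 0) ∧ (∀ j, c j = 0) :=
  stmt_16_general δ hδind γ hγalg hγnr hnd
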